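/- Let A be a unital ring and c \in A a central element such that A is c-adically complete, i.e. the canonical ring homomorphism A \to \varprojlim_n A/c^n A is bijective. If the quotient ring A/cA is left noetherian, then A is left noetherian. -/

import Mathlib

/-!
For a left ideal `I` of `A`, the left ideals `(I : cⁿ) = {a | a * cⁿ ∈ I}` increase with `n`, so
their images in the noetherian ring `A/cA` are finitely generated and stabilize from some `N` on.
Lift generators to finite sets `sₙ ⊆ (I : cⁿ)`. For `n ≥ N` every `b ∈ (I : cⁿ)` is `y + c z` with
`y ∈ span s_N` and `z ∈ (I : cⁿ⁺¹)`; iterating and summing the resulting `c`-adically convergent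
series gives `(I : c^N) = span s_N`. Descending from `N` to `0`, `I` is then generated by the
finitely many `a * cᵐ` with `m ≤ N` and `a ∈ sₘ`.
-/


section

variable {A : Type*} [Ring A]

/-- For a central element `c` of a ring `A`, the congruence relation on `A` identifying
`a` and `b` when `a - b ∈ cⁿA`; its quotient ring is `A/cⁿA`. -/
def adicCon (c : A) (hc : ∀ a : A, c * a = a * c) (n : ℕ) : RingCon A where
  r a b := ∃ x : A, a - b = c ^ n * x
  iseqv := by
    refine ⟨fun a => ⟨0, by simp⟩, ?_, ?_⟩
    · rintro a b ⟨x, hx⟩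
      refine ⟨-x, ?_⟩
      rw [mul_neg, ← hx]; abel
    · rintro a b d ⟨x, hx⟩ ⟨y, hy⟩
      refine ⟨x + y, ?_⟩
      rw [mul_add, ← hx, ← hy]; abel
  add' := by
    rintro a b a' b' ⟨x, hx⟩ ⟨y, hy⟩
    refine ⟨x + y, ?_⟩
    rw [mul_add, ← hx, ← hy]; abel
  mul' := by
    rintro a b a' b' ⟨x, hx⟩ ⟨y, hy⟩
    have h1 : Commute (c ^ n) a := Commute.pow_left (hc a) n
    refine ⟨a * y + x * b', ?_⟩
    calc a * a' - b * b' = a * (a' - b') + (a - b) * b' := by noncomm_ring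
      _ = a * (c ^ n * y) + c ^ n * x * b' := by rw [hx, hy]
      _ = c ^ n * (a * y) + c ^ n * (x * b') := by
          rw [← mul_assoc, ← h1.eq, mul_assoc, mul_assoc]
      _ = c ^ n * (a * y + x * b') := by rw [mul_add]

/-- The transition map `A/c^(n+1)A → A/cⁿA` of the inverse system. -/
def adicTransition (c : A) (hc : ∀ a : A, c * a = a * c) (n : ℕ) :
    (adicCon c hc (n + 1)).Quotient → (adicCon c hc n).Quotient :=
  Quotient.map' id (by
    rintro a b ⟨x, hx⟩
    exact ⟨c * x, by show a - b = _; rw [hx, pow_succ, mul_assoc]⟩)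

/-- The inverse limit `lim_n A/cⁿA`, realized as the set of sequences compatible with
the transition maps. -/
def AdicLim (c : A) (hc : ∀ a : A, c * a = a * c) : Type _ :=
  { f : ∀ n : ℕ, (adicCon c hc n).Quotient //
    ∀ n : ℕ, adicTransition c hc n (f (n + 1)) = f n }

/-- The canonical map `A → lim_n A/cⁿA` (the underlying function of the canonical ring
homomorphism). -/
def toAdicLim (c : A) (hc : ∀ a : A, c * a = a * c) (a : A) : AdicLim c hc :=
  ⟨fun n => (adicCon c hc n).mk' a, fun n => rfl⟩

theorem Ideal.exists_finset_subset_map_span_eq {R S : Type*} [Semiring R] [Semiring S]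
    {f : R →+* S} (hf : Function.Surjective f) {J : Ideal R} (hJ : (J.map f).FG) :
    ∃ s : Finset R, (s : Set R) ⊆ J ∧ (Ideal.span (s : Set R)).map f = J.map f := by
  classical
  obtain ⟨t, ht⟩ := hJ
  have htJ : ↑t ⊆ f '' J := fun y hy =>
    (Ideal.mem_map_iff_of_surjective f hf).mp (ht ▸ Submodule.subset_span hy)
  obtain ⟨s, hsJ, rfl⟩ := Finset.subset_set_image_iff.mp htJ
  exact ⟨s, hsJ, by rw [Ideal.map_span, ← Finset.coe_image, ← ht]⟩

section AdicCompleteness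

variable {c : A} {hc : ∀ a : A, c * a = a * c}

theorem adicCon_mk_eq_iff (n : ℕ) (a b : A) :
    (adicCon c hc n).mk' a = (adicCon c hc n).mk' b ↔ c ^ n ∣ a - b :=
  (adicCon c hc n).eq

theorem eq_zero_of_forall_pow_dvd (hinj : Function.Injective (toAdicLim c hc)) {z : A}
    (h : ∀ n, c ^ n ∣ z) : z = 0 :=
  hinj <| Subtype.ext <| funext fun n => (adicCon_mk_eq_iff n z 0).mpr (by simpa using h n)

theorem exists_forall_pow_dvd_sub_sum (hsurj : Function.Surjective (toAdicLim c hc))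
    (u : ℕ → A) : ∃ r : A, ∀ n, c ^ n ∣ r - ∑ k ∈ Finset.range n, c ^ k * u k := by
  let partialSum (n : ℕ) : A := ∑ k ∈ Finset.range n, c ^ k * u k
  obtain ⟨r, hr⟩ := hsurj ⟨fun n => (adicCon c hc n).mk' (partialSum n), fun n =>
    (adicCon_mk_eq_iff n _ _).mpr ⟨u n, by simp [partialSum, Finset.sum_range_succ]⟩⟩
  exact ⟨r, fun n => (adicCon_mk_eq_iff n _ _).mp (congrFun (congrArg Subtype.val hr) n)⟩

open Finset in
/- Complete Nakayama: iterating `hM` writes `x = y₀ + c y₁ + c² y₂ + ⋯` with `yₖ ∈ span s`, and the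
coefficients of the `yₖ` on `s` sum up `c`-adically. -/
theorem subset_span_of_forall_eq_add_mul (hcomplete : Function.Bijective (toAdicLim c hc))
    {s : Finset A} {M : Set A}
    (hM : ∀ x ∈ M, ∃ y ∈ Ideal.span (s : Set A), ∃ x' ∈ M, x = y + c * x') :
    M ⊆ Ideal.span (s : Set A) := by
  have hM' : ∀ x : M, ∃ t : A → A, ∃ x' : M, (x : A) = ∑ a ∈ s, t a * a + c * x' := by
    rintro ⟨x, hx⟩
    obtain ⟨y, hy, x', hx', rfl⟩ := hM x hx
    obtain ⟨t, -, rfl⟩ := Submodule.mem_span_finset.mp hy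
    exact ⟨t, ⟨x', hx'⟩, rfl⟩
  choose t next hnext using hM'
  intro x hx
  let seq (n : ℕ) : M := next^[n] ⟨x, hx⟩
  have hexpand : ∀ n, x = ∑ a ∈ s, (∑ k ∈ range n, c ^ k * t (seq k) a) * a + c ^ n * seq n := by
    intro n
    induction n with
    | zero => simp [seq]
    | succ n ih =>
      have hseq : seq (n + 1) = next (seq n) := Function.iterate_succ_apply' _ _ _
      rw [ih, hnext (seq n), hseq, mul_add, mul_sum, ← add_assoc, ← sum_add_distrib]
      simp only [sum_range_succ, add_mul, pow_succ, mul_assoc]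
  choose r hr using fun a => exists_forall_pow_dvd_sub_sum hcomplete.2 fun k => t (seq k) a
  have hx : x = ∑ a ∈ s, r a * a := by
    rw [← sub_eq_zero]
    refine eq_zero_of_forall_pow_dvd hcomplete.1 fun n => ?_
    rw [hexpand n, add_sub_right_comm, ← sum_sub_distrib]
    refine dvd_add (dvd_sum fun a _ => ?_) (dvd_mul_right _ _)
    rw [← sub_mul, ← neg_sub]
    exact ((hr a n).neg_right).mul_right a
  rw [hx]
  exact Ideal.sum_mem _ fun a ha => Ideal.mul_mem_left _ _ (Ideal.subset_span ha)

end AdicCompleteness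

section ColonPow

def colonPow (I : Ideal A) (c : A) (n : ℕ) : Ideal A :=
  Submodule.comap (LinearMap.toSpanSingleton A A (c ^ n)) I

variable {I : Ideal A} {c : A}

theorem mem_colonPow {n : ℕ} {a : A} : a ∈ colonPow I c n ↔ a * c ^ n ∈ I := Iff.rfl

theorem colonPow_zero : colonPow I c 0 = I := by
  ext a
  simp [mem_colonPow]

theorem colonPow_mono (hc : ∀ a : A, c * a = a * c) : Monotone (colonPow I c) := by
  intro m n hmn a ha
  rw [mem_colonPow, ← Nat.sub_add_cancel hmn, pow_add, ← mul_assoc,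
    ← (Commute.pow_left (hc a) _).eq, mul_assoc]
  exact I.mul_mem_left _ (mem_colonPow.mp ha)

theorem exists_eq_add_mul_of_mem_colonPow (hc : ∀ a : A, c * a = a * c) {s : Set A} {n : ℕ}
    (hs : Ideal.span s ≤ colonPow I c n) {b : A} (hb : b ∈ colonPow I c n)
    (hbs : (adicCon c hc 1).mk' b ∈ (Ideal.span s).map (adicCon c hc 1).mk') :
    ∃ y ∈ Ideal.span s, ∃ z ∈ colonPow I c (n + 1), b = y + c * z := by
  obtain ⟨y, hy, hyb⟩ :=
    (Ideal.mem_map_iff_of_surjective _ (adicCon c hc 1).mk'_surjective).mp hbs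
  obtain ⟨z, hz⟩ := (adicCon_mk_eq_iff 1 b y).mp hyb.symm
  rw [pow_one] at hz
  refine ⟨y, hy, z, ?_, by rw [← hz]; abel⟩
  have : z * c ^ (n + 1) = b * c ^ n - y * c ^ n := by
    rw [← sub_mul, hz, pow_succ', ← mul_assoc, hc z]
  rw [mem_colonPow, this]
  exact I.sub_mem hb (hs hy)

end ColonPow

section Generators

variable {I : Ideal A} {c : A} {hc : ∀ a : A, c * a = a * c}

theorem colonPow_le_span_of_map_le (hcomplete : Function.Bijective (toAdicLim c hc))
    {s : Finset A} {N : ℕ} (hs : Ideal.span (s : Set A) ≤ colonPow I c N)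
    (hstab : ∀ n ≥ N, (colonPow I c n).map (adicCon c hc 1).mk' ≤
      (Ideal.span (s : Set A)).map (adicCon c hc 1).mk') :
    colonPow I c N ≤ Ideal.span (s : Set A) := by
  refine fun b hb => subset_span_of_forall_eq_add_mul (M := {x | ∃ n ≥ N, x ∈ colonPow I c n})
    hcomplete ?_ ⟨N, le_rfl, hb⟩
  rintro x ⟨n, hn, hx⟩
  obtain ⟨y, hy, z, hz, rfl⟩ := exists_eq_add_mul_of_mem_colonPow hc
    (hs.trans (colonPow_mono hc hn)) hx (hstab n hn (Ideal.mem_map_of_mem _ hx))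
  exact ⟨y, hy, z, ⟨n + 1, by omega, hz⟩, rfl⟩

open Finset in
theorem span_biUnion_image_mul_pow_eq [DecidableEq A] (hc : ∀ a : A, c * a = a * c) {N : ℕ}
    {s : ℕ → Finset A} (hs : ∀ m, (s m : Set A) ⊆ colonPow I c m)
    (hsmod : ∀ m < N, (colonPow I c m).map (adicCon c hc 1).mk' ≤
      (Ideal.span (s m : Set A)).map (adicCon c hc 1).mk')
    (hN : colonPow I c N ≤ Ideal.span (s N : Set A)) :
    Ideal.span ↑((range (N + 1)).biUnion fun m => (s m).image (· * c ^ m)) = I := by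
  set G := (range (N + 1)).biUnion fun m => (s m).image (· * c ^ m)
  have hspan : ∀ m ≤ N, ∀ y ∈ Ideal.span (s m : Set A), y * c ^ m ∈ Ideal.span (G : Set A) := by
    intro m hm y hy
    have := Submodule.mem_map_of_mem (f := LinearMap.toSpanSingleton A A (c ^ m)) hy
    rw [Submodule.map_span] at this
    refine Submodule.span_mono ?_ this
    rintro _ ⟨a, ha, rfl⟩
    simp only [G, coe_biUnion, coe_range, coe_image, Set.mem_iUnion, Set.mem_Iio]
    exact ⟨m, by omega, a, ha, rfl⟩
  have hdesc : ∀ m ≤ N, ∀ b ∈ colonPow I c m, b * c ^ m ∈ Ideal.span (G : Set A) := by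
    intro m hm
    induction hm using Nat.decreasingInduction with
    | self => exact fun b hb => hspan N le_rfl b (hN hb)
    | of_succ k hk ih =>
      intro b hb
      obtain ⟨y, hy, z, hz, rfl⟩ := exists_eq_add_mul_of_mem_colonPow hc
        (Ideal.span_le.mpr (hs k)) hb (hsmod k hk (Ideal.mem_map_of_mem _ hb))
      rw [add_mul, hc z, mul_assoc, ← pow_succ']
      exact add_mem (hspan k hk.le y hy) (ih z hz)
  refine le_antisymm (Ideal.span_le.mpr ?_) fun b hb => by
    simpa using hdesc 0 (Nat.zero_le N) b (by rwa [colonPow_zero])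
  simp only [G, coe_biUnion, coe_range, coe_image, Set.iUnion_subset_iff, Set.image_subset_iff]
  exact fun m _ a ha => hs m ha

end Generators

/-- let `A` be a unital ring and `c ∈ A` a central element such that `A` is
`c`-adically complete (the canonical ring homomorphism `A → lim_n A/cⁿA` is bijective).
If `A/cA` is left noetherian, then `A` is left noetherian. -/
theorem isNoetherianRing_of_adicComplete_of_quotient_noetherian
    (c : A) (hc : ∀ a : A, c * a = a * c)
    (hcomplete : Function.Bijective (toAdicLim c hc))
    (hnoeth : IsNoetherianRing (adicCon c hc 1).Quotient) :
    IsNoetherianRing A := by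
  classical
  refine (isNoetherianRing_iff_ideal_fg A).mpr fun I => ?_
  let π := (adicCon c hc 1).mk'
  obtain ⟨N, hN⟩ := monotone_stabilizes_iff_noetherian.mpr hnoeth
    ⟨fun n => (colonPow I c n).map π, fun _ _ hmn => Ideal.map_mono (colonPow_mono hc hmn)⟩
  choose s hsI hsπ using fun n => Ideal.exists_finset_subset_map_span_eq
    (adicCon c hc 1).mk'_surjective (IsNoetherian.noetherian ((colonPow I c n).map π))
  have hsN : colonPow I c N ≤ Ideal.span (s N : Set A) :=
    colonPow_le_span_of_map_le hcomplete (Ideal.span_le.mpr (hsI N)) fun n hn => by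
      rw [hsπ N]
      exact (hN n hn).ge
  exact ⟨_, span_biUnion_image_mul_pow_eq hc hsI (fun m _ => (hsπ m).ge) hsN⟩

end
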